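/- For κ > 0, σ τ(κ) with τ(κ) = Γ(2κ+1)/(2^{2-κ}Γ(κ+1)) equals the first lower partial moment magnitude E[(μ − r)·1_{r ≤ μ}] of r ~ GED(μ, σ, κ), i.e. ∫_{-∞}^{μ} (μ − r) f(r) dr = σ τ(κ) where f is the GED(μ, σ, κ) density. -/
import Mathlib

open MeasureTheory

noncomputable def gedDensity (μ σ κ : ℝ) (r : ℝ) : ℝ :=
  Real.exp (-(1 / 2) * |(r - μ) / σ| ^ (1 / κ)) /
    (2 ^ (κ + 1) * σ * Real.Gamma (κ + 1))

noncomputable def tau (κ : ℝ) : ℝ :=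
  Real.Gamma (2 * κ + 1) / (2 ^ ((2 : ℝ) - κ) * Real.Gamma (κ + 1))

open Set Real in
lemma integral_comp_const_sub_Iic (c : ℝ) (f : ℝ → ℝ) :
    (∫ x in Iic c, f (c - x)) = ∫ x in Ioi (0 : ℝ), f x := by
  have A : MeasurableEmbedding (fun x : ℝ => c - x) :=
    (Homeomorph.subLeft c).isClosedEmbedding.measurableEmbedding
  have hmap : Measure.map (fun x : ℝ => c - x) volume = volume :=
    Measure.map_sub_left_eq_self volume c
  have h := A.setIntegral_map (μ := (volume : Measure ℝ)) f (Ici 0)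
  rw [hmap] at h
  have hpre : (fun x : ℝ => c - x) ⁻¹' Ici 0 = Iic c := by
    ext x; simp [sub_nonneg]
  rw [hpre] at h
  rw [← h, integral_Ici_eq_integral_Ioi]

open Set Real in
theorem lower_partial_moment (μ σ κ : ℝ) (hσ : 0 < σ) (hκ : 0 < κ) :
    ∫ r in Set.Iic μ, (μ - r) * gedDensity μ σ κ r = σ * tau κ := by
  have h2κ : (0:ℝ) < 2 * κ := by linarith
  have step1 : (∫ r in Set.Iic μ, (μ - r) * gedDensity μ σ κ r)
      = ∫ x in Ioi (0:ℝ),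
          x * Real.exp (-(1 / 2) * |(-x) / σ| ^ (1 / κ)) /
            (2 ^ (κ + 1) * σ * Real.Gamma (κ + 1)) := by
    rw [← integral_comp_const_sub_Iic μ
      (fun x => x * Real.exp (-(1 / 2) * |(-x) / σ| ^ (1 / κ)) /
        (2 ^ (κ + 1) * σ * Real.Gamma (κ + 1)))]
    refine setIntegral_congr_fun measurableSet_Iic (fun r _ => ?_)
    simp only [gedDensity]
    rw [show -(μ - r) = r - μ by ring]
    ring
  rw [step1]
  simp_rw [integral_div]
  have step2 : (∫ x in Ioi (0:ℝ), x * Real.exp (-(1 / 2) * |(-x) / σ| ^ (1 / κ)))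
      = σ * σ * ∫ y in Ioi (0:ℝ), y * Real.exp (-(1 / 2) * y ^ (1 / κ)) := by
    have e1 : (∫ x in Ioi (0:ℝ), x * Real.exp (-(1 / 2) * |(-x) / σ| ^ (1 / κ)))
        = ∫ x in Ioi (0:ℝ),
            σ * ((fun y => y * Real.exp (-(1 / 2) * y ^ (1 / κ))) (σ⁻¹ * x)) := by
      refine setIntegral_congr_fun measurableSet_Ioi (fun x hx => ?_)
      have hx0 : (0:ℝ) < x := hx
      have habs : |(-x) / σ| = σ⁻¹ * x := by
        rw [abs_div, abs_neg, abs_of_pos hx0, abs_of_pos hσ]; ring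
      rw [habs]
      field_simp
    rw [e1, integral_const_mul,
      integral_comp_mul_left_Ioi (fun y => y * Real.exp (-(1 / 2) * y ^ (1 / κ))) 0
        (inv_pos.mpr hσ), mul_zero, smul_eq_mul, inv_inv]
    ring
  rw [step2]
  have step3 : (∫ y in Ioi (0:ℝ), y * Real.exp (-(1 / 2) * y ^ (1 / κ)))
      = (2:ℝ) ^ (2*κ) * κ * Real.Gamma (2 * κ) := by
    have h := integral_rpow_mul_exp_neg_mul_rpow (p := 1/κ) (q := 1) (b := 1/2)
      (by positivity) (by norm_num) (by norm_num)
    have e : (∫ y in Ioi (0:ℝ), y * Real.exp (-(1 / 2) * y ^ (1 / κ)))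
        = ∫ y in Ioi (0:ℝ), y ^ (1:ℝ) * Real.exp (-(1/2) * y ^ (1/κ)) := by
      refine setIntegral_congr_fun measurableSet_Ioi (fun y hy => ?_)
      rw [Real.rpow_one]
    have e2 : ((1:ℝ)+1)/(1/κ) = 2*κ := by
      rw [div_div_eq_mul_div, div_one]; ring
    have e3 : -((1:ℝ)+1)/(1/κ) = -(2*κ) := by
      rw [div_div_eq_mul_div, div_one]; ring
    have e4 : (1:ℝ)/(1/κ) = κ := by
      rw [one_div, one_div, inv_inv]
    rw [e, h, e2, e3, e4]
    rw [show ((1:ℝ)/2) ^ (-(2*κ)) = (2:ℝ) ^ (2*κ) by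
      rw [one_div, Real.inv_rpow (by norm_num), Real.rpow_neg (by norm_num), inv_inv]]
  rw [step3]
  have hG : Real.Gamma (2 * κ + 1) = 2 * κ * Real.Gamma (2 * κ) :=
    Real.Gamma_add_one (ne_of_gt h2κ)
  rw [tau, hG]
  have hΓpos : 0 < Real.Gamma (κ + 1) := Real.Gamma_pos_of_pos (by linarith)
  have hp1 : (0:ℝ) < (2:ℝ) ^ (κ + 1) := Real.rpow_pos_of_pos (by norm_num) _
  have hp2 : (0:ℝ) < (2:ℝ) ^ ((2:ℝ) - κ) := Real.rpow_pos_of_pos (by norm_num) _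
  have key : (2:ℝ) ^ (2*κ) * (2:ℝ) ^ ((2:ℝ) - κ) = 2 * (2:ℝ) ^ (κ + 1) := by
    have h1 : (2:ℝ) ^ (2*κ) * (2:ℝ) ^ ((2:ℝ) - κ) = (2:ℝ) ^ (κ + 2) := by
      rw [← Real.rpow_add two_pos]; congr 1; ring
    have h2 : (2:ℝ) ^ (κ + (2:ℝ)) = (2:ℝ) ^ (κ + 1) * (2:ℝ) ^ (1:ℝ) := by
      rw [← Real.rpow_add two_pos]; congr 1; ring
    rw [h1, h2, Real.rpow_one]; ring
  rw [div_eq_iff (by positivity)]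
  rw [show σ * (2 * κ * Real.Gamma (2 * κ) /
      (2 ^ ((2:ℝ) - κ) * Real.Gamma (κ + 1))) * (2 ^ (κ + 1) * σ * Real.Gamma (κ + 1))
    = (σ * (2 * κ * Real.Gamma (2 * κ)) * (2 ^ (κ + 1) * σ * Real.Gamma (κ + 1))) /
      (2 ^ ((2:ℝ) - κ) * Real.Gamma (κ + 1)) by ring]
  rw [eq_div_iff (by positivity)]
  linear_combination (σ * σ * κ * Real.Gamma (2*κ) * Real.Gamma (κ+1)) * key
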